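/- (Theorem 6.32: the trace class equals the adjointable compact operators.) Assume in addition that K is proper (locally compact). For a continuous K-linear operator T : H →L[K] H, the following are equivalent: (a) T is of trace class, i.e. Tendsto (fun q : ℕ × ℕ => (T (e q.2)) q.1) Filter.cofinite (nhds 0); (b) T is a compact operator (IsCompactOperator T) and T is adjointable (there exists S : H →L[K] H with ⟪x, T y⟫ = ⟪S x, y⟫ for all x, y). -/

import Mathlib

/-!
Write `t i j = (T (e j)) i`. Convergence `t → 0` along the cofinite filter of `ℕ × ℕ` amounts to
two conditions: the rows `t i ·` tend to `0` uniformly as `i → ∞`, and each single row is a zero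
sequence.

If `T` is of trace class, uniform decay of the rows makes `T` the operator-norm limit of the
finite-rank operators `P_N ∘ T`, where `P_N` keeps the first `N` coordinates (on the ultrametric
space `H`, a functional is bounded by the supremum of its values on the `e j`); hence `T` is
compact. Uniform decay of the columns, i.e. `T (e j) → 0`, makes `x ↦ (j ↦ ⟪T (e j), x⟫)` a bounded
operator into `H`, and it is the adjoint because both sides of `⟪x, T y⟫ = ⟪S x, y⟫` are continuous
and linear in `y` and agree on the `e j`.

Conversely, a compact `T` maps all `e j` into one compact set, whose elements have uniformly small
tails, so the rows decay uniformly; and `t i j = star ((S (e i)) j)` makes each row a zero sequence.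
-/

open Filter

noncomputable section

variable (K : Type*) [NontriviallyNormedField K] [IsUltrametricDist K]
  [CompleteSpace K] [StarRing K] [NormedStarGroup K]

/-- The p-adic coordinate Hilbert space: zero-convergent sequences in `K` with sup norm. -/
abbrev H := ZeroAtInftyContinuousMap ℕ K

/-- The standard basis vectors of `H K`. -/
def e (n : ℕ) : H K where
  toFun := fun m => if m = n then 1 else 0
  continuous_toFun := continuous_of_discreteTopology
  zero_at_infty' := by
    rw [cocompact_eq_atTop]
    refine Filter.Tendsto.congr' ?_ tendsto_const_nhds
    filter_upwards [Filter.eventually_gt_atTop n] with m hm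
    simp [Nat.ne_of_gt hm]

/-- The canonical inner product on `H K`: `⟪x, y⟫ = ∑' i, star (x i) * y i`. -/
def inner' (x y : H K) : K := ∑' i, star (x i) * y i

/-- A bounded operator is of trace class if its matrix entries vanish along the
cofinite filter of `ℕ × ℕ`. -/
def IsTraceClass (T : H K →L[K] H K) : Prop :=
  Tendsto (fun q : ℕ × ℕ => (T (e K q.2)) q.1) Filter.cofinite (nhds 0)

open Topology
open scoped ZeroAtInfty

section CofiniteProd

variable {α β γ : Type*}

lemma Filter.prod_top_le_cofinite : (cofinite : Filter α) ×ˢ (⊤ : Filter β) ≤ cofinite := by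
  rw [prod_top, ← coprod_cofinite]
  exact le_sup_left

lemma Filter.tendsto_cofinite_of_prod_top {f : α × β → γ} {l : Filter γ}
    (h_unif : Tendsto f (cofinite ×ˢ ⊤) l) (h_row : ∀ a, Tendsto (fun b => f (a, b)) cofinite l) :
    Tendsto f cofinite l := by
  intro U hU
  obtain ⟨s, hs, hsU⟩ := mem_comap.1 (prod_top (f := (cofinite : Filter α)) ▸ h_unif hU)
  rw [mem_map, mem_cofinite]
  refine ((mem_cofinite.1 hs).biUnion fun a _ =>
    (Set.finite_singleton a).prod (mem_cofinite.1 (h_row a hU))).subset ?_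
  rintro ⟨a, b⟩ hab
  exact Set.mem_biUnion (fun ha => hab (hsU ha)) ⟨rfl, hab⟩

end CofiniteProd

lemma tendstoUniformly_const_iff {ι α β : Type*} [UniformSpace β] {F : ι → α → β} {c : β}
    {p : Filter ι} :
    TendstoUniformly F (fun _ => c) p ↔ Tendsto (Function.uncurry F) (p ×ˢ ⊤) (𝓝 c) := by
  rw [tendstoUniformly_iff_tendsto, nhds_eq_comap_uniformity, tendsto_comap_iff]
  rfl

namespace ZeroAtInftyContinuousMap

variable {α E : Type*} [TopologicalSpace α] [NormedAddCommGroup E]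

lemma norm_apply_le (x : C₀(α, E)) (a : α) : ‖x a‖ ≤ ‖x‖ := by
  rw [← norm_toBCF_eq_norm]
  exact x.toBCF.norm_coe_le_norm a

lemma norm_le_of_forall_le {x : C₀(α, E)} {C : ℝ} (hC : 0 ≤ C) (h : ∀ a, ‖x a‖ ≤ C) :
    ‖x‖ ≤ C := by
  rw [← norm_toBCF_eq_norm]
  exact (BoundedContinuousFunction.norm_le hC).2 h

lemma lipschitzWith_eval (a : α) : LipschitzWith 1 fun x : C₀(α, E) => x a :=
  LipschitzWith.mk_one fun x y => by
    rw [← dist_toBCF_eq_dist]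
    exact x.toBCF.dist_coe_le_dist (g := y.toBCF) a

variable (𝕜 : Type*) [NormedField 𝕜] [NormedSpace 𝕜 E] in
def evalCLM (a : α) : C₀(α, E) →L[𝕜] E :=
  LinearMap.mkContinuous
    { toFun := fun x => x a
      map_add' := fun _ _ => rfl
      map_smul' := fun _ _ => rfl } 1
    fun x => by simpa using norm_apply_le x a

@[simp]
lemma evalCLM_apply (𝕜 : Type*) [NormedField 𝕜] [NormedSpace 𝕜 E] (a : α) (x : C₀(α, E)) :
    evalCLM 𝕜 a x = x a :=
  rfl

lemma tendsto_atTop_zero (x : C₀(ℕ, E)) : Tendsto x atTop (𝓝 0) := by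
  simpa [cocompact_eq_atTop] using x.zero_at_infty'

def ofTendsto (f : ℕ → E) (hf : Tendsto f atTop (𝓝 0)) : C₀(ℕ, E) where
  toFun := f
  continuous_toFun := continuous_of_discreteTopology
  zero_at_infty' := by rwa [cocompact_eq_atTop]

/-- Equicontinuity of the coordinate functionals turns their pointwise convergence to `0`
into uniform convergence on compact sets. -/
lemma _root_.IsCompact.tendstoUniformlyOn_eval {s : Set C₀(ℕ, E)} (hs : IsCompact s) :
    TendstoUniformlyOn (fun n (x : C₀(ℕ, E)) => x n) (fun _ => 0) atTop s := by
  have : CompactSpace s := isCompact_iff_compactSpace.mp hs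
  have hequi : Equicontinuous fun n (x : s) => (x : C₀(ℕ, E)) n :=
    (LipschitzWith.uniformEquicontinuous _ 1 fun n =>
      LipschitzWith.mk_one fun x y => by
        simpa [Subtype.dist_eq] using (lipschitzWith_eval n).dist_le_mul (x : C₀(ℕ, E)) y)
      |>.equicontinuous
  rw [tendstoUniformlyOn_iff_tendstoUniformly_comp_coe]
  exact UniformFun.tendsto_iff_tendstoUniformly.1 <| (hequi.tendsto_uniformFun_iff_pi atTop _).2 <|
    tendsto_pi_nhds.2 fun x => tendsto_atTop_zero (x : C₀(ℕ, E))

section CLM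

variable {𝕜 F : Type*} [NontriviallyNormedField 𝕜] [NormedSpace 𝕜 E] [NormedAddCommGroup F]
  [NormedSpace 𝕜 F]

def clmOfTendsto (φ : ℕ → F →L[𝕜] E) (hφ : Tendsto φ atTop (𝓝 0)) :
    F →L[𝕜] C₀(ℕ, E) :=
  LinearMap.mkContinuousOfExistsBound
    { toFun := fun x => ofTendsto (fun j => φ j x) <|
        ((ContinuousLinearMap.apply 𝕜 E x).continuous.tendsto' 0 0 (by simp)).comp hφ
      map_add' := fun x y => by ext j; exact map_add (φ j) x y
      map_smul' := fun c x => by ext j; exact map_smul (φ j) c x }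
    (by
      obtain ⟨C, hC⟩ := (Metric.isBounded_range_of_tendsto φ hφ).exists_norm_le
      refine ⟨C, fun x => norm_le_of_forall_le ?_ fun j => (φ j).le_of_opNorm_le (hC _ ⟨j, rfl⟩) x⟩
      exact mul_nonneg ((norm_nonneg _).trans (hC _ ⟨0, rfl⟩)) (norm_nonneg x))

@[simp]
lemma clmOfTendsto_apply (φ : ℕ → F →L[𝕜] E) (hφ : Tendsto φ atTop (𝓝 0)) (x : F) (j : ℕ) :
    clmOfTendsto φ hφ x j = φ j x :=
  rfl

end CLM

end ZeroAtInftyContinuousMap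

section Coordinates

open ZeroAtInftyContinuousMap

variable {𝕜 : Type*} [NontriviallyNormedField 𝕜]

lemma e_apply (n m : ℕ) : e 𝕜 n m = if m = n then 1 else 0 := rfl

lemma norm_e (n : ℕ) : ‖e 𝕜 n‖ = 1 := by
  refine le_antisymm (norm_le_of_forall_le zero_le_one fun m => ?_) ?_
  · rw [e_apply]
    split_ifs <;> simp
  · simpa [e_apply] using norm_apply_le (e 𝕜 n) n

lemma sum_smul_e_apply (s : Finset ℕ) (c : ℕ → 𝕜) (m : ℕ) :
    (∑ j ∈ s, c j • e 𝕜 j) m = if m ∈ s then c m else 0 := by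
  rw [← evalCLM_apply 𝕜, map_sum]
  simp [e_apply]

lemma hasSum_smul_e (x : H 𝕜) : HasSum (fun j => x j • e 𝕜 j) x := by
  rw [HasSum, SummationFilter.unconditional_filter, Metric.tendsto_atTop]
  intro ε hε
  obtain ⟨N, hN⟩ := eventually_atTop.1 <|
    NormedAddGroup.tendsto_nhds_zero.1 (tendsto_atTop_zero x) _ (half_pos hε)
  refine ⟨Finset.range N, fun s hs => ?_⟩
  rw [dist_eq_norm]
  refine (norm_le_of_forall_le (half_pos hε).le fun m => ?_).trans_lt (half_lt_self hε)
  rw [ZeroAtInftyContinuousMap.sub_apply, sum_smul_e_apply]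
  split_ifs with hm
  · simpa using (half_pos hε).le
  · have hNm : N ≤ m := not_lt.1 fun hmN => hm (hs (Finset.mem_range.2 hmN))
    simpa using (hN m hNm).le

lemma ext_e {F : Type*} [TopologicalSpace F] [AddCommMonoid F] [Module 𝕜 F] [T2Space F]
    {f g : H 𝕜 →L[𝕜] F} (h : ∀ j, f (e 𝕜 j) = g (e 𝕜 j)) : f = g :=
  ContinuousLinearMap.ext fun x => ((hasSum_smul_e x).mapL f).unique <| by
    simpa only [map_smul, h] using (hasSum_smul_e x).mapL g

lemma norm_apply_le_of_forall_norm_apply_e_le {F : Type*} [NormedAddCommGroup F] [NormedSpace 𝕜 F]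
    [IsUltrametricDist F] (φ : H 𝕜 →L[𝕜] F) {C : ℝ} (hC : 0 ≤ C) (h : ∀ j, ‖φ (e 𝕜 j)‖ ≤ C)
    (x : H 𝕜) : ‖φ x‖ ≤ C * ‖x‖ := by
  rw [← ((hasSum_smul_e x).mapL φ).tsum_eq]
  refine IsUltrametricDist.norm_tsum_le_of_forall_le_of_nonneg (by positivity) fun j => ?_
  rw [map_smul, norm_smul, mul_comm]
  exact mul_le_mul (h j) (norm_apply_le x j) (norm_nonneg _) hC

end Coordinates

section Inner

open ZeroAtInftyContinuousMap

variable {𝕜 : Type*} [NontriviallyNormedField 𝕜] [StarRing 𝕜]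

lemma inner'_e_left (i : ℕ) (x : H 𝕜) : inner' 𝕜 (e 𝕜 i) x = x i := by
  rw [inner', tsum_eq_single i fun m hm => by simp [e_apply, hm]]
  simp [e_apply]

lemma inner'_e_right (x : H 𝕜) (j : ℕ) : inner' 𝕜 x (e 𝕜 j) = star (x j) := by
  rw [inner', tsum_eq_single j fun m hm => by simp [e_apply, hm]]
  simp [e_apply]

lemma star_inner' [ContinuousStar 𝕜] (x y : H 𝕜) : star (inner' 𝕜 x y) = inner' 𝕜 y x := by
  simp only [inner', tsum_star, star_mul, star_star, mul_comm]

variable [IsUltrametricDist 𝕜] [CompleteSpace 𝕜] [NormedStarGroup 𝕜]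

lemma summable_star_mul (y x : H 𝕜) : Summable fun i => star (y i) * x i := by
  refine NonarchimedeanAddGroup.summable_of_tendsto_cofinite_zero ?_
  rw [Nat.cofinite_eq_atTop]
  refine squeeze_zero_norm (fun i => ?_) (by simpa using (tendsto_atTop_zero x).norm.const_mul ‖y‖)
  rw [norm_mul, norm_star]
  exact mul_le_mul_of_nonneg_right (norm_apply_le y i) (norm_nonneg _)

def innerSL' (y : H 𝕜) : H 𝕜 →L[𝕜] 𝕜 :=
  LinearMap.mkContinuous
    { toFun := inner' 𝕜 y
      map_add' := fun x x' => by
        simp only [inner', ZeroAtInftyContinuousMap.add_apply, mul_add]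
        exact (summable_star_mul y x).tsum_add (summable_star_mul y x')
      map_smul' := fun c x => by
        simp only [inner', ZeroAtInftyContinuousMap.smul_apply, smul_eq_mul, RingHom.id_apply,
          ← tsum_mul_left, mul_left_comm] }
    ‖y‖
    fun x => IsUltrametricDist.norm_tsum_le_of_forall_le_of_nonneg (by positivity) fun i => by
      rw [norm_mul, norm_star]
      exact mul_le_mul (norm_apply_le y i) (norm_apply_le x i) (norm_nonneg _) (norm_nonneg _)

lemma innerSL'_apply (y x : H 𝕜) : innerSL' y x = inner' 𝕜 y x := rfl

lemma norm_innerSL'_le (y : H 𝕜) : ‖innerSL' y‖ ≤ ‖y‖ :=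
  LinearMap.mkContinuous_norm_le _ (norm_nonneg y) _

end Inner

lemma isCompactOperator_smulRight {𝕜 M N : Type*} [NontriviallyNormedField 𝕜]
    [LocallyCompactSpace 𝕜] [TopologicalSpace M] [AddCommMonoid M] [Module 𝕜 M]
    [TopologicalSpace N] [AddCommMonoid N] [Module 𝕜 N] [ContinuousSMul 𝕜 N]
    (φ : M →L[𝕜] 𝕜) (v : N) : IsCompactOperator (φ.smulRight v) :=
  (isCompactOperator_of_locallyCompactSpace_dom φ).clm_comp
    ((ContinuousLinearMap.id 𝕜 𝕜).smulRight v)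

section Operators

open ZeroAtInftyContinuousMap

variable {𝕜 : Type*} [NontriviallyNormedField 𝕜] {T : H 𝕜 →L[𝕜] H 𝕜}

lemma IsTraceClass.tendstoUniformly_apply_e (hT : IsTraceClass 𝕜 T) :
    TendstoUniformly (fun i j => T (e 𝕜 j) i) (fun _ => 0) atTop := by
  rw [tendstoUniformly_const_iff, ← Nat.cofinite_eq_atTop]
  exact hT.mono_left prod_top_le_cofinite

lemma IsTraceClass.tendsto_apply_e (hT : IsTraceClass 𝕜 T) :
    Tendsto (fun j => T (e 𝕜 j)) atTop (𝓝 0) := by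
  rw [tendsto_iff_tendstoUniformly, coe_zero, Pi.zero_def, tendstoUniformly_const_iff,
    ← Nat.cofinite_eq_atTop]
  exact (hT.comp Prod.swap_injective.tendsto_cofinite).mono_left prod_top_le_cofinite

variable (𝕜) in
def truncation (N : ℕ) : H 𝕜 →L[𝕜] H 𝕜 :=
  ∑ i ∈ Finset.range N, (evalCLM 𝕜 i).smulRight (e 𝕜 i)

lemma truncation_apply (N : ℕ) (x : H 𝕜) (m : ℕ) :
    truncation 𝕜 N x m = if m < N then x m else 0 := by
  simp [truncation, sum_smul_e_apply]

lemma isCompactOperator_truncation [LocallyCompactSpace 𝕜] (N : ℕ) :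
    IsCompactOperator (truncation 𝕜 N) :=
  Finset.sum_induction _ (fun f : H 𝕜 →L[𝕜] H 𝕜 => IsCompactOperator f)
    (fun _ _ hf hg => hf.add hg) isCompactOperator_zero
    fun _ _ => isCompactOperator_smulRight _ _

lemma norm_sub_truncation_comp_le [IsUltrametricDist 𝕜] {N : ℕ} {ε : ℝ} (hε : 0 ≤ ε)
    (h : ∀ i ≥ N, ∀ j, ‖T (e 𝕜 j) i‖ ≤ ε) : ‖T - truncation 𝕜 N ∘L T‖ ≤ ε := by
  refine ContinuousLinearMap.opNorm_le_bound _ hε fun x =>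
    norm_le_of_forall_le (by positivity) fun m => ?_
  simp only [_root_.sub_apply, ContinuousLinearMap.comp_apply,
    ZeroAtInftyContinuousMap.sub_apply, truncation_apply]
  split_ifs with hm
  · rw [sub_self, norm_zero]
    positivity
  · simpa using norm_apply_le_of_forall_norm_apply_e_le ((evalCLM 𝕜 m).comp T) hε
      (fun j => h m (not_lt.1 hm) j) x

lemma IsTraceClass.isCompactOperator [IsUltrametricDist 𝕜] [ProperSpace 𝕜]
    (hT : IsTraceClass 𝕜 T) : IsCompactOperator T := by
  refine isCompactOperator_of_tendsto (l := atTop) (F := fun N => truncation 𝕜 N ∘L T) ?_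
    (Eventually.of_forall fun N => (isCompactOperator_truncation N).comp_clm T)
  rw [Metric.tendsto_atTop]
  intro ε hε
  obtain ⟨N, hN⟩ := eventually_atTop.1 <|
    Metric.tendstoUniformly_iff.1 hT.tendstoUniformly_apply_e _ (half_pos hε)
  refine ⟨N, fun n hn => ?_⟩
  rw [dist_comm, dist_eq_norm]
  refine (norm_sub_truncation_comp_le (half_pos hε).le fun i hi j => ?_).trans_lt (half_lt_self hε)
  simpa using (hN i (hn.trans hi) j).le

lemma IsTraceClass.exists_adjoint [IsUltrametricDist 𝕜] [CompleteSpace 𝕜] [StarRing 𝕜]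
    [NormedStarGroup 𝕜] (hT : IsTraceClass 𝕜 T) :
    ∃ S : H 𝕜 →L[𝕜] H 𝕜, ∀ x y : H 𝕜, inner' 𝕜 x (T y) = inner' 𝕜 (S x) y := by
  have hS : Tendsto (fun j => innerSL' (T (e 𝕜 j))) atTop (𝓝 0) := by
    refine squeeze_zero_norm (f := fun j => innerSL' (T (e 𝕜 j))) (fun j => norm_innerSL'_le _) ?_
    simpa using hT.tendsto_apply_e.norm
  refine ⟨clmOfTendsto _ hS, fun x => DFunLike.congr_fun (?_ : (innerSL' x).comp T =
    innerSL' (clmOfTendsto _ hS x))⟩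
  refine ext_e fun j => ?_
  simp [innerSL'_apply, inner'_e_right, star_inner']

lemma IsCompactOperator.tendstoUniformly_apply_e (hT : IsCompactOperator T) :
    TendstoUniformly (fun i j => T (e 𝕜 j) i) (fun _ => 0) atTop := by
  obtain ⟨C, hC, hTC⟩ := hT.image_closedBall_subset_compact 1
  have hmem : (fun j => T (e 𝕜 j)) ⁻¹' C = Set.univ :=
    Set.eq_univ_of_forall fun j => hTC ⟨e 𝕜 j, by simp [norm_e], rfl⟩
  rw [← tendstoUniformlyOn_univ, ← hmem]
  exact hC.tendstoUniformlyOn_eval.comp _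

lemma IsCompactOperator.isTraceClass [StarRing 𝕜] [ContinuousStar 𝕜] (hT : IsCompactOperator T)
    {S : H 𝕜 →L[𝕜] H 𝕜} (hS : ∀ x y : H 𝕜, inner' 𝕜 x (T y) = inner' 𝕜 (S x) y) :
    IsTraceClass 𝕜 T := by
  have h_row (i : ℕ) : Tendsto (fun j => T (e 𝕜 j) i) cofinite (𝓝 0) := by
    have h_entry : (fun j => T (e 𝕜 j) i) = fun j => star (S (e 𝕜 i) j) :=
      funext fun j => by rw [← inner'_e_left, hS, inner'_e_right]
    simpa [h_entry, Nat.cofinite_eq_atTop] using (tendsto_atTop_zero (S (e 𝕜 i))).star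
  have h_unif := tendstoUniformly_const_iff.1 hT.tendstoUniformly_apply_e
  rw [← Nat.cofinite_eq_atTop] at h_unif
  exact tendsto_cofinite_of_prod_top h_unif h_row

end Operators

/-- The trace class coincides with the adjointable compact operators. -/
theorem stmt16 [ProperSpace K] (T : H K →L[K] H K) :
    IsTraceClass K T ↔
      (IsCompactOperator T ∧
        ∃ S : H K →L[K] H K, ∀ x y : H K, inner' K x (T y) = inner' K (S x) y) :=
  ⟨fun hT => ⟨hT.isCompactOperator, hT.exists_adjoint⟩, fun ⟨hT, _, hS⟩ => hT.isTraceClass hS⟩
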